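/- Let g > 0, h_l > 0, u_l > 0 be real numbers and set z := u_l²/(g·h_l). If z ≤ 1, then f(h̃) = f(h_l) = −(2/g)·u_l²·h_l² < 0; if z > 1, then f(h̃) = h_l³·(1 − (1/2)·√(1 + 8z)·(√(1 + 8z) − 1)) < −2·h_l³ < 0. Consequently h̃ < h̲, where h̲ is the largest real root of f. -/
import Mathlib


/-- The cubic `f(h) = h³ − h_l h² − (h_l² + (2/g)u_l²h_l)h + h_l³`. -/
noncomputable def fCubic (g hl ul h : ℝ) : ℝ :=
  h ^ 3 - hl * h ^ 2 - (hl ^ 2 + (2 / g) * ul ^ 2 * hl) * h + hl ^ 3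

/-- `h̃ = h_l` if `z ≤ 1` and `h̃ = (h_l/2)(√(1+8z) − 1)` if `z > 1`,
where `z = u_l²/(gh_l)`. -/
noncomputable def hTilde (g hl ul : ℝ) : ℝ :=
  if ul ^ 2 / (g * hl) ≤ 1 then hl
  else (hl / 2) * (Real.sqrt (1 + 8 * (ul ^ 2 / (g * hl))) - 1)

/-- `f(h̃) < 0` (with the stated explicit values in the two cases `z ≤ 1`, `z > 1`);
consequently `h̃ < h̲`, `h̲` being the largest real root of `f`. -/
theorem stmt_16 (g hl ul hunder : ℝ) (hg : 0 < g) (hhl : 0 < hl) (hul : 0 < ul)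
    (hroot : fCubic g hl ul hunder = 0)
    (hmax : ∀ x : ℝ, fCubic g hl ul x = 0 → x ≤ hunder) :
    (ul ^ 2 / (g * hl) ≤ 1 →
      fCubic g hl ul (hTilde g hl ul) = fCubic g hl ul hl ∧
      fCubic g hl ul hl = -(2 / g) * ul ^ 2 * hl ^ 2 ∧
      -(2 / g) * ul ^ 2 * hl ^ 2 < 0) ∧
    (1 < ul ^ 2 / (g * hl) →
      fCubic g hl ul (hTilde g hl ul) =
        hl ^ 3 * (1 - (1 / 2) * Real.sqrt (1 + 8 * (ul ^ 2 / (g * hl)))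
          * (Real.sqrt (1 + 8 * (ul ^ 2 / (g * hl))) - 1)) ∧
      fCubic g hl ul (hTilde g hl ul) < -2 * hl ^ 3 ∧ -2 * hl ^ 3 < 0) ∧
    hTilde g hl ul < hunder := by
  have hzpos : 0 < ul ^ 2 / (g * hl) := by positivity
  have hzrw : (2 / g) * ul ^ 2 * hl = 2 * (ul ^ 2 / (g * hl)) * hl ^ 2 := by
    field_simp
  have hpos3 : 0 < hl ^ 3 := by positivity
  -- Case z ≤ 1
  have part1 : ul ^ 2 / (g * hl) ≤ 1 →
      fCubic g hl ul (hTilde g hl ul) = fCubic g hl ul hl ∧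
      fCubic g hl ul hl = -(2 / g) * ul ^ 2 * hl ^ 2 ∧
      -(2 / g) * ul ^ 2 * hl ^ 2 < 0 := by
    intro h
    have ht : hTilde g hl ul = hl := by simp only [hTilde, if_pos h]
    have hq : 0 < (2 / g) * ul ^ 2 * hl ^ 2 := by positivity
    exact ⟨by rw [ht], by unfold fCubic; ring, by linarith⟩
  -- Case z > 1
  have part2 : 1 < ul ^ 2 / (g * hl) →
      fCubic g hl ul (hTilde g hl ul) =
        hl ^ 3 * (1 - (1 / 2) * Real.sqrt (1 + 8 * (ul ^ 2 / (g * hl)))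
          * (Real.sqrt (1 + 8 * (ul ^ 2 / (g * hl))) - 1)) ∧
      fCubic g hl ul (hTilde g hl ul) < -2 * hl ^ 3 ∧ -2 * hl ^ 3 < 0 := by
    intro h1
    have hs0 : 0 ≤ Real.sqrt (1 + 8 * (ul ^ 2 / (g * hl))) := Real.sqrt_nonneg _
    have hs2 : Real.sqrt (1 + 8 * (ul ^ 2 / (g * hl))) ^ 2 = 1 + 8 * (ul ^ 2 / (g * hl)) :=
      Real.sq_sqrt (by linarith)
    have hs3 : 3 < Real.sqrt (1 + 8 * (ul ^ 2 / (g * hl))) := by nlinarith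
    have ht : hTilde g hl ul = (hl / 2) * (Real.sqrt (1 + 8 * (ul ^ 2 / (g * hl))) - 1) := by
      simp only [hTilde, if_neg (not_le.mpr h1)]
    have heq : fCubic g hl ul (hTilde g hl ul) =
        hl ^ 3 * (1 - (1 / 2) * Real.sqrt (1 + 8 * (ul ^ 2 / (g * hl)))
          * (Real.sqrt (1 + 8 * (ul ^ 2 / (g * hl))) - 1)) := by
      rw [ht]
      unfold fCubic
      rw [hzrw]
      linear_combination (hl ^ 3 * (Real.sqrt (1 + 8 * (ul ^ 2 / (g * hl))) - 1) / 8) * hs2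
    refine ⟨heq, ?_, by linarith⟩
    rw [heq]
    have h6 : 6 < Real.sqrt (1 + 8 * (ul ^ 2 / (g * hl))) *
        (Real.sqrt (1 + 8 * (ul ^ 2 / (g * hl))) - 1) := by nlinarith
    nlinarith [mul_pos hpos3 (show (0:ℝ) < Real.sqrt (1 + 8 * (ul ^ 2 / (g * hl))) *
        (Real.sqrt (1 + 8 * (ul ^ 2 / (g * hl))) - 1) - 6 by linarith)]
  refine ⟨part1, part2, ?_⟩
  -- f(h̃) < 0 and h̃ > 0
  obtain ⟨fneg, htpos⟩ : fCubic g hl ul (hTilde g hl ul) < 0 ∧ 0 < hTilde g hl ul := by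
    by_cases h : ul ^ 2 / (g * hl) ≤ 1
    · obtain ⟨e1, e2, e3⟩ := part1 h
      refine ⟨by rw [e1, e2]; exact e3, ?_⟩
      simp only [hTilde, if_pos h]; exact hhl
    · push_neg at h
      obtain ⟨e1, e2, e3⟩ := part2 h
      have hs2 : Real.sqrt (1 + 8 * (ul ^ 2 / (g * hl))) ^ 2 = 1 + 8 * (ul ^ 2 / (g * hl)) :=
        Real.sq_sqrt (by positivity)
      have hs3 : 3 < Real.sqrt (1 + 8 * (ul ^ 2 / (g * hl))) := by
        nlinarith [Real.sqrt_nonneg (1 + 8 * (ul ^ 2 / (g * hl)))]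
      refine ⟨by linarith, ?_⟩
      simp only [hTilde, if_neg (not_le.mpr h)]
      nlinarith
  -- a point where f is positive
  set b := hl ^ 2 + (2 / g) * ul ^ 2 * hl with hb
  have hbpos : 0 < b := by positivity
  set M := hTilde g hl ul + 1 + hl + b with hMdef
  have hM1 : 1 + hl + b ≤ M := by linarith
  have hMge1 : (1 : ℝ) ≤ M := by linarith
  have hMpos : 0 < M := by linarith
  have hMht : hTilde g hl ul < M := by linarith
  have hfM : 0 < fCubic g hl ul M := by
    unfold fCubic
    rw [← hb]
    nlinarith [mul_nonneg (mul_nonneg (sub_nonneg.2 hM1) hMpos.le) hMpos.le,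
      mul_nonneg (mul_nonneg (sub_nonneg.2 hMge1) hbpos.le) hMpos.le,
      hpos3, mul_pos hMpos hMpos]
  have hcont : ContinuousOn (fCubic g hl ul) (Set.Icc (hTilde g hl ul) M) := by
    apply Continuous.continuousOn
    unfold fCubic
    fun_prop
  have h0mem : (0:ℝ) ∈ Set.Icc (fCubic g hl ul (hTilde g hl ul)) (fCubic g hl ul M) :=
    ⟨fneg.le, hfM.le⟩
  obtain ⟨c, hcmem, hc0⟩ := intermediate_value_Icc hMht.le hcont h0mem
  have hchT : hTilde g hl ul < c := by
    rcases lt_or_eq_of_le hcmem.1 with hlt | heq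
    · exact hlt
    · rw [← heq] at hc0; rw [hc0] at fneg; linarith
  exact lt_of_lt_of_le hchT (hmax c hc0)
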